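/- Let P₁ = (−2·cos(π/9)·sin(2π/9), 2·cos(π/9)·cos(2π/9)) and P₁' = R(P₁) = (2·cos(π/9)·sin(π/9), −2·cos(π/9)·cos(π/9)). Then the line through P₁ and P₁' meets the circle 𝒞 in exactly one point, namely T₁ = (−2√3·s, 2s); that is, this line is tangent to 𝒞 at T₁. -/

import Mathlib

open Real

noncomputable section

abbrev Pt := EuclideanSpace ℝ (Fin 2)

def pt (x y : ℝ) : Pt := (WithLp.equiv 2 _).symm ![x, y]

/-- The affine line through two points `A` and `B`. -/
def lineThrough (A B : Pt) : Set Pt := {P | ∃ t : ℝ, P = A + t • (B - A)}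

/-- Counterclockwise rotation by angle `θ` about the point `c`. -/
def rotAbout (θ : ℝ) (c p : Pt) : Pt :=
  pt (c 0 + Real.cos θ * (p 0 - c 0) - Real.sin θ * (p 1 - c 1))
     (c 1 + Real.sin θ * (p 0 - c 0) + Real.cos θ * (p 1 - c 1))

/-- The origin. -/
def O : Pt := pt 0 0

/-- Vertices of the regular 9-gon: `D i = (cos(2πi/9 + 17π/18), sin(2πi/9 + 17π/18))`. -/
def D (i : ℤ) : Pt :=
  pt (Real.cos (2 * π * i / 9 + 17 * π / 18)) (Real.sin (2 * π * i / 9 + 17 * π / 18))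

/-- The constant s = sin(π/18)·cos(π/9). -/
def s : ℝ := Real.sin (π / 18) * Real.cos (π / 9)

/-- The point P₁. -/
def P₁ : Pt :=
  pt (-(2 * Real.cos (π / 9) * Real.sin (2 * π / 9)))
     (2 * Real.cos (π / 9) * Real.cos (2 * π / 9))

/-- The point P₁' = R(P₁). -/
def P₁' : Pt :=
  pt (2 * Real.cos (π / 9) * Real.sin (π / 9))
     (-(2 * Real.cos (π / 9) * Real.cos (π / 9)))

/-- The tangency point T₁ = (−2√3·s, 2s). -/
def T₁ : Pt := pt (-(2 * Real.sqrt 3 * s)) (2 * s)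

/-!
The circle through `O` and the mirror-image points `D (-1), D (-3) = (∓sin 40°, cos 40°)` has
center `(0, k)` and radius `k` with `2 k cos 40° = 1`; the identity `8 sin 10° cos 20° cos 40° = 1`
gives `k = 4 s`. The direction `P₁' - P₁` is a multiple of `(1, -√3)`, `T₁` is the point of the
line with parameter `2 sin 10°`, and `T₁ - (0, 4 s) = 2 s (-√3, -1)` is orthogonal to that direction
and has length `4 s`. By Pythagoras a line orthogonal to a radius at its endpoint meets the circle
only there. All angles are handled through `20° = 30° - 10°` and `40° = 30° + 10°`.
-/

open Metric InnerProductSpace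

@[simp] lemma pt_apply_zero (x y : ℝ) : pt x y 0 = x := rfl
@[simp] lemma pt_apply_one (x y : ℝ) : pt x y 1 = y := rfl

lemma pt_eta (P : Pt) : pt (P 0) (P 1) = P := by
  ext i; fin_cases i <;> rfl

lemma pt_add_pt (a b c d : ℝ) : pt a b + pt c d = pt (a + c) (b + d) := by
  ext i; fin_cases i <;> rfl

lemma pt_sub_pt (a b c d : ℝ) : pt a b - pt c d = pt (a - c) (b - d) := by
  ext i; fin_cases i <;> rfl

lemma smul_pt (t a b : ℝ) : t • pt a b = pt (t * a) (t * b) := by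
  ext i; fin_cases i <;> rfl

lemma pt_eq_pt_iff {a b c d : ℝ} : pt a b = pt c d ↔ a = c ∧ b = d := by
  refine ⟨fun h => ⟨congrArg (· 0) h, congrArg (· 1) h⟩, ?_⟩
  rintro ⟨rfl, rfl⟩; rfl

lemma inner_pt_pt (a b c d : ℝ) : ⟪pt a b, pt c d⟫_ℝ = a * c + b * d := by
  simp [PiLp.inner_apply, Fin.sum_univ_two, pt, mul_comm]

lemma norm_pt (a b : ℝ) : ‖pt a b‖ = √(a ^ 2 + b ^ 2) := by
  simp [EuclideanSpace.norm_eq, Fin.sum_univ_two, pt]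

lemma dist_pt_pt (a b c d : ℝ) : dist (pt a b) (pt c d) = √((a - c) ^ 2 + (b - d) ^ 2) := by
  rw [dist_eq_norm, pt_sub_pt, norm_pt]

lemma eq_zero_of_norm_add_smul_eq_norm {V : Type*} [NormedAddCommGroup V] [InnerProductSpace ℝ V]
    {x v : V} {t : ℝ} (hv : v ≠ 0) (hxv : ⟪x, v⟫_ℝ = 0) (h : ‖x + t • v‖ = ‖x‖) : t = 0 := by
  have hpyth := norm_add_sq_eq_norm_sq_add_norm_sq_real (x := x) (y := t • v)
    (by rw [inner_smul_right, hxv, mul_zero])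
  rw [h] at hpyth
  have : ‖t • v‖ = 0 := by nlinarith [norm_nonneg (t • v)]
  simpa [hv] using this

lemma lineThrough_inter_sphere_eq_singleton {A B T c : Pt} {r : ℝ} (hAB : A ≠ B)
    (hT : T ∈ lineThrough A B) (hTc : T ∈ sphere c r) (hperp : ⟪T - c, B - A⟫_ℝ = 0) :
    lineThrough A B ∩ sphere c r = {T} := by
  obtain ⟨t₀, hT⟩ := hT
  ext P
  refine ⟨fun ⟨⟨t, hP⟩, hPc⟩ => ?_, fun hP => hP ▸ ⟨⟨t₀, hT⟩, hTc⟩⟩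
  have hdecomp : P - c = (T - c) + (t - t₀) • (B - A) := by
    rw [hP, hT, sub_smul]; abel
  rw [mem_sphere, dist_eq_norm] at hPc hTc
  rw [hdecomp, ← hTc] at hPc
  have ht := eq_zero_of_norm_add_smul_eq_norm (sub_ne_zero.mpr hAB.symm) hperp hPc
  rw [Set.mem_singleton_iff, hP, hT, sub_eq_zero.mp ht]

lemma center_eq_of_mem_sphere {x y : ℝ} {c : Pt} {r : ℝ} (hx : x ≠ 0)
    (h₁ : pt (-x) y ∈ sphere c r) (h₂ : pt x y ∈ sphere c r) (h₀ : O ∈ sphere c r) :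
    c = pt 0 ((x ^ 2 + y ^ 2) / (2 * y)) := by
  rw [O] at h₀
  rw [← pt_eta c, mem_sphere, dist_pt_pt] at h₁ h₂ h₀
  have e₁ := congrArg (· ^ 2) (h₁.trans h₀.symm)
  have e₂ := congrArg (· ^ 2) (h₂.trans h₀.symm)
  simp only at e₁ e₂
  rw [Real.sq_sqrt (by positivity), Real.sq_sqrt (by positivity)] at e₁ e₂
  have hc₀ : c 0 = 0 := by
    have : x * c 0 = 0 := by linear_combination (e₂ - e₁) / (-4)
    simpa [hx] using this
  have hc₁ : 2 * y * c 1 = x ^ 2 + y ^ 2 := by linear_combination -e₂ - 2 * x * hc₀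
  have hy : y ≠ 0 := by
    rintro rfl
    exact hx (pow_eq_zero_iff two_ne_zero |>.mp (by linarith [sq_nonneg x]))
  rw [← pt_eta c, hc₀, ← hc₁]
  field_simp

lemma sin_pi_div_nine : sin (π / 9) = (cos (π / 18) - √3 * sin (π / 18)) / 2 := by
  rw [show π / 9 = π / 6 - π / 18 by ring, sin_sub, sin_pi_div_six, cos_pi_div_six]; ring

lemma cos_pi_div_nine : cos (π / 9) = (√3 * cos (π / 18) + sin (π / 18)) / 2 := by
  rw [show π / 9 = π / 6 - π / 18 by ring, cos_sub, sin_pi_div_six, cos_pi_div_six]; ring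

lemma sin_two_pi_div_nine : sin (2 * π / 9) = (cos (π / 18) + √3 * sin (π / 18)) / 2 := by
  rw [show 2 * π / 9 = π / 6 + π / 18 by ring, sin_add, sin_pi_div_six, cos_pi_div_six]; ring

lemma cos_two_pi_div_nine : cos (2 * π / 9) = (√3 * cos (π / 18) - sin (π / 18)) / 2 := by
  rw [show 2 * π / 9 = π / 6 + π / 18 by ring, cos_add, sin_pi_div_six, cos_pi_div_six]; ring

lemma eight_mul_sin_pi_div_eighteen_mul_cos_mul_cos :
    8 * sin (π / 18) * cos (π / 9) * cos (2 * π / 9) = 1 := by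
  have h3 := sin_three_mul (π / 18)
  rw [show 3 * (π / 18) = π / 6 by ring, sin_pi_div_six] at h3
  rw [cos_pi_div_nine, cos_two_pi_div_nine]
  linear_combination (-2) * h3 + 6 * sin (π / 18) * sin_sq_add_cos_sq (π / 18)
    + 2 * sin (π / 18) * cos (π / 18) ^ 2 * Real.sq_sqrt (show (0 : ℝ) ≤ 3 by norm_num)

lemma s_pos : 0 < s :=
  mul_pos (sin_pos_of_pos_of_lt_pi (by positivity) (by linarith [pi_pos]))
    (cos_pos_of_mem_Ioo ⟨by linarith [pi_pos], by linarith [pi_pos]⟩)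

lemma D_neg_one : D (-1) = pt (-sin (2 * π / 9)) (cos (2 * π / 9)) := by
  rw [D, show 2 * π * ((-1 : ℤ) : ℝ) / 9 + 17 * π / 18 = 2 * π / 9 + π / 2 by push_cast; ring,
    cos_add_pi_div_two, sin_add_pi_div_two]

lemma D_neg_three : D (-3) = pt (sin (2 * π / 9)) (cos (2 * π / 9)) := by
  rw [D, show 2 * π * ((-3 : ℤ) : ℝ) / 9 + 17 * π / 18 = π / 2 - 2 * π / 9 by push_cast; ring,
    cos_pi_div_two_sub, sin_pi_div_two_sub]

lemma center_eq_of_D_mem_sphere {c : Pt} {r : ℝ} (h₁ : D (-1) ∈ sphere c r)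
    (h₃ : D (-3) ∈ sphere c r) (h₀ : O ∈ sphere c r) : c = pt 0 (4 * s) := by
  rw [D_neg_one] at h₁
  rw [D_neg_three] at h₃
  have hsin : sin (2 * π / 9) ≠ 0 :=
    (sin_pos_of_pos_of_lt_pi (by positivity) (by linarith [pi_pos])).ne'
  rw [center_eq_of_mem_sphere hsin h₁ h₃ h₀, sin_sq_add_cos_sq, pt_eq_pt_iff]
  refine ⟨rfl, ?_⟩
  have := eight_mul_sin_pi_div_eighteen_mul_cos_mul_cos
  rw [div_eq_iff (mul_ne_zero two_ne_zero (right_ne_zero_of_mul_eq_one this)), s]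
  linarith

lemma rotAbout_P₁ : rotAbout (8 * π / 9) O P₁ = P₁' := by
  simp only [rotAbout, O, P₁, P₁', pt_apply_zero, pt_apply_one, pt_eq_pt_iff]
  rw [show 8 * π / 9 = π - π / 9 by ring, show 2 * π / 9 = 2 * (π / 9) by ring, cos_pi_sub,
    sin_pi_sub, sin_two_mul, cos_two_mul]
  constructor
  · ring
  · linear_combination (-4 * cos (π / 9) ^ 2) * sin_sq_add_cos_sq (π / 9)

lemma P₁'_sub_P₁ : P₁' - P₁ = (2 * cos (π / 9) * cos (π / 18)) • pt 1 (-√3) := by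
  rw [P₁', P₁, pt_sub_pt, smul_pt, pt_eq_pt_iff, sin_pi_div_nine, sin_two_pi_div_nine,
    cos_pi_div_nine, cos_two_pi_div_nine]
  constructor <;> ring

lemma P₁_ne_P₁' : P₁ ≠ P₁' := by
  intro h
  have hcos : 0 < 2 * cos (π / 9) * cos (π / 18) := by
    have := cos_pos_of_mem_Ioo (x := π / 9) ⟨by linarith [pi_pos], by linarith [pi_pos]⟩
    have := cos_pos_of_mem_Ioo (x := π / 18) ⟨by linarith [pi_pos], by linarith [pi_pos]⟩
    positivity
  have h0 := congrArg (· 0) P₁'_sub_P₁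
  simp only [h, sub_self, smul_pt, pt_apply_zero, mul_one] at h0
  exact hcos.ne h0

lemma T₁_eq : T₁ = P₁ + (2 * sin (π / 18)) • (P₁' - P₁) := by
  have hsin : 2 * sin (π / 18) * cos (π / 18) = (cos (π / 18) - √3 * sin (π / 18)) / 2 := by
    rw [← sin_two_mul, ← sin_pi_div_nine]; ring_nf
  rw [P₁'_sub_P₁, smul_smul, T₁, P₁, s, smul_pt, pt_add_pt, pt_eq_pt_iff, sin_two_pi_div_nine,
    cos_two_pi_div_nine]
  constructor
  · linear_combination (-2 * cos (π / 9)) * hsin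
  · linear_combination (2 * √3 * cos (π / 9)) * hsin
      - cos (π / 9) * sin (π / 18) * Real.sq_sqrt (show (0 : ℝ) ≤ 3 by norm_num)

lemma T₁_mem_sphere : T₁ ∈ sphere (pt 0 (4 * s)) (4 * s) := by
  have h : (-(2 * √3 * s) - 0) ^ 2 + (2 * s - 4 * s) ^ 2 = (4 * s) ^ 2 := by
    linear_combination 4 * s ^ 2 * Real.sq_sqrt (show (0 : ℝ) ≤ 3 by norm_num)
  rw [mem_sphere, T₁, dist_pt_pt, h, Real.sqrt_sq (by linarith [s_pos])]

lemma inner_T₁_sub_center_P₁'_sub_P₁ : ⟪T₁ - pt 0 (4 * s), P₁' - P₁⟫_ℝ = 0 := by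
  rw [P₁'_sub_P₁, inner_smul_right, T₁, pt_sub_pt, inner_pt_pt]
  ring

theorem line_P1P1'_tangent_to_circle
    (C : Set Pt) (ctr : Pt) (rad : ℝ)
    (hC : C = Metric.sphere ctr rad)
    (h1 : D (-1) ∈ C) (h2 : D (-3) ∈ C) (h3 : O ∈ C) :
    rotAbout (8 * π / 9) O P₁ = P₁' ∧
    lineThrough P₁ P₁' ∩ C = {T₁} := by
  subst hC
  obtain rfl : ctr = pt 0 (4 * s) := center_eq_of_D_mem_sphere h1 h2 h3
  obtain rfl : rad = 4 * s := by
    rw [← mem_sphere.mp h3, O, dist_pt_pt]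
    simp [s_pos.le]
  exact ⟨rotAbout_P₁, lineThrough_inter_sphere_eq_singleton P₁_ne_P₁' ⟨_, T₁_eq⟩ T₁_mem_sphere
    inner_T₁_sub_center_P₁'_sub_P₁⟩
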